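/- Given a light-like curve α in the light-cone of E⁴₂ with span{α(t),α'(t)} two-dimensional, a smooth function a : J → ℝ nowhere zero, a smooth function L : J → ℝ, and η : J → ℝ⁴ satisfying ⟨η',η'⟩ = 0, ⟨α,η'⟩ = 0, ⟨η',α'⟩ = -1/a, ⟨η',α''⟩ = (2a' - aL)/a², the map f(s,t) = η(t) + (s a'(t) - a(t)(m(s,t) + sL(t)))α(t) + s a(t)α'(t) satisfies ⟨f_s,f_s⟩ = 0, ⟨f_s,f_t⟩ = -1, and ⟨f_t,f_t⟩ = 2m(s,t), i.e. f is an isometric immersion of (Ω, g_m) into E⁴₂. -/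

import Mathlib

/-- The neutral bilinear form of `E⁴₂` on `ℝ⁴`. -/
def neutralForm (x y : Fin 4 → ℝ) : ℝ :=
  -(x 0 * y 0) - x 1 * y 1 + x 2 * y 2 + x 3 * y 3

/-- The immersion of Proposition 4.2:
`f(s,t) = η(t) + (s a'(t) - a(t)(m(s,t) + sL(t)))α(t) + s a(t)α'(t)`. -/
noncomputable def bicSurf (α η : ℝ → (Fin 4 → ℝ)) (a L : ℝ → ℝ) (m : ℝ → ℝ → ℝ)
    (s t : ℝ) : Fin 4 → ℝ :=
  η t + (s * deriv a t - a t * (m s t + s * L t)) • α t + (s * a t) • deriv α t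

open Module
open scoped ContDiff

lemma nf_symm (x y : Fin 4 → ℝ) : neutralForm x y = neutralForm y x := by
  simp [neutralForm]; ring

lemma nf_add_left (x y z : Fin 4 → ℝ) :
    neutralForm (x + y) z = neutralForm x z + neutralForm y z := by
  simp [neutralForm]; ring

lemma nf_add_right (x y z : Fin 4 → ℝ) :
    neutralForm x (y + z) = neutralForm x y + neutralForm x z := by
  simp [neutralForm]; ring

lemma nf_smul_left (c : ℝ) (x z : Fin 4 → ℝ) :
    neutralForm (c • x) z = c * neutralForm x z := by
  simp [neutralForm]; ring

lemma nf_smul_right (c : ℝ) (x z : Fin 4 → ℝ) :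
    neutralForm x (c • z) = c * neutralForm x z := by
  simp [neutralForm]; ring

lemma hasDerivAt_nf {f g : ℝ → Fin 4 → ℝ} {f' g' : Fin 4 → ℝ} {t : ℝ}
    (hf : HasDerivAt f f' t) (hg : HasDerivAt g g' t) :
    HasDerivAt (fun u => neutralForm (f u) (g u))
      (neutralForm f' (g t) + neutralForm (f t) g') t := by
  have F := hasDerivAt_pi.mp hf
  have G := hasDerivAt_pi.mp hg
  have H := ((((F 0).mul (G 0)).neg.sub ((F 1).mul (G 1))).add ((F 2).mul (G 2))).add
    ((F 3).mul (G 3))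
  exact H.congr_deriv (by simp [neutralForm]; ring)

/-- `neutralForm` as a bilinear form. -/
noncomputable def NB : LinearMap.BilinForm ℝ (Fin 4 → ℝ) :=
  LinearMap.mk₂ ℝ neutralForm
    (fun x y z => by simp [neutralForm]; ring)
    (fun c x y => by simp [neutralForm]; ring)
    (fun x y z => by simp [neutralForm]; ring)
    (fun c x y => by simp [neutralForm]; ring)

@[simp] lemma NB_apply (x y : Fin 4 → ℝ) : NB x y = neutralForm x y := rfl

lemma NB_refl : NB.IsRefl := fun x y h => by
  show NB y x = 0; rw [NB_apply, nf_symm]; exact h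

lemma NB_nondeg : NB.Nondegenerate := by
  show LinearMap.Nondegenerate NB
  rw [NB_refl.nondegenerate_iff_separatingLeft]
  intro x hx
  funext i
  fin_cases i
  · have := hx (fun j => if j = 0 then 1 else 0); simp [neutralForm] at this; simpa using this
  · have := hx (fun j => if j = 1 then 1 else 0); simp [neutralForm] at this; simpa using this
  · have := hx (fun j => if j = 2 then 1 else 0); simp [neutralForm] at this; simpa using this
  · have := hx (fun j => if j = 3 then 1 else 0); simp [neutralForm] at this; simpa using this

/-- Key lemma: if `u,v` span a totally isotropic 2-plane and `w ⟂ u, w ⟂ v`,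
then `w` is isotropic. -/
lemma isotropic_of_orthogonal (u v w : Fin 4 → ℝ)
    (hind : LinearIndependent ℝ ![u, v])
    (huu : neutralForm u u = 0) (huv : neutralForm u v = 0) (hvv : neutralForm v v = 0)
    (hwu : neutralForm u w = 0) (hwv : neutralForm v w = 0) :
    neutralForm w w = 0 := by
  have nvu : neutralForm v u = 0 := by rw [nf_symm]; exact huv
  set W : Submodule ℝ (Fin 4 → ℝ) := Submodule.span ℝ {u, v} with hW
  have hmem : ∀ x ∈ W, ∃ c d : ℝ, x = c • u + d • v := by
    intro x hx
    rw [hW, Submodule.mem_span_pair] at hx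
    obtain ⟨c, d, h⟩ := hx
    exact ⟨c, d, h.symm⟩
  have hWle : W ≤ NB.orthogonal W := by
    intro x hx y hy
    obtain ⟨c, d, hxe⟩ := hmem x hx
    obtain ⟨c', d', hye⟩ := hmem y hy
    show NB y x = 0
    rw [hxe, hye]
    simp only [map_add, map_smul, LinearMap.add_apply, LinearMap.smul_apply, smul_eq_mul,
      NB_apply]
    rw [huu, huv, hvv, nvu]
    ring
  have hfr : finrank ℝ W = 2 := by
    rw [hW]
    rw [show ({u, v} : Set (Fin 4 → ℝ)) = Set.range ![u, v] by
      ext x; simp [Matrix.range_cons, Matrix.range_empty]; tauto]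
    rw [finrank_span_eq_card hind]
    simp
  have hfro : finrank ℝ (NB.orthogonal W) = 2 := by
    rw [LinearMap.BilinForm.finrank_orthogonal NB_nondeg W, hfr]
    simp [finrank_pi]
  have hWeq : W = NB.orthogonal W :=
    Submodule.eq_of_le_of_finrank_le hWle (by rw [hfr, hfro])
  have hwW : w ∈ NB.orthogonal W := by
    intro y hy
    obtain ⟨c, d, hye⟩ := hmem y hy
    show NB y w = 0
    rw [hye]
    simp [NB_apply, nf_add_left, nf_smul_left, hwu, hwv]
  rw [← hWeq] at hwW
  obtain ⟨c, d, hwe⟩ := hmem w hwW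
  rw [hwe]
  simp only [neutralForm] at huu huv hvv nvu ⊢
  simp only [Pi.add_apply, Pi.smul_apply, smul_eq_mul]
  linear_combination (c * c) * huu + (c * d) * huv + (c * d) * nvu + (d * d) * hvv

/-- Under the stated conditions on the light-like curve `α` in the
light-cone, the nowhere-zero function `a`, the function `L` and the curve `η`, the map
`f(s,t) = η(t) + (s a'(t) - a(t)(m(s,t) + sL(t)))α(t) + s a(t)α'(t)` satisfies
`⟨f_s,f_s⟩ = 0`, `⟨f_s,f_t⟩ = -1`, `⟨f_t,f_t⟩ = 2m`, i.e. it is an isometric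
immersion of `(Ω, g_m)` into `E⁴₂`. -/
theorem bicSurf_isometric
    (α η : ℝ → (Fin 4 → ℝ)) (a L : ℝ → ℝ) (m : ℝ → ℝ → ℝ)
    (hα : ContDiff ℝ (⊤ : ℕ∞) α) (hη : ContDiff ℝ (⊤ : ℕ∞) η)
    (ha : ContDiff ℝ (⊤ : ℕ∞) a) (hL : ContDiff ℝ (⊤ : ℕ∞) L)
    (hm : ContDiff ℝ (⊤ : ℕ∞) (fun p : ℝ × ℝ => m p.1 p.2))
    (ha0 : ∀ t, a t ≠ 0)
    -- `α` is a light-like curve lying in the light-cone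
    (hαcone : ∀ t, neutralForm (α t) (α t) = 0)
    (hαnull : ∀ t, neutralForm (deriv α t) (deriv α t) = 0)
    -- `span{α(t), α'(t)}` is two-dimensional
    (hdim : ∀ t, LinearIndependent ℝ ![α t, deriv α t])
    -- the conditions (4.2) on `η`
    (hη1 : ∀ t, neutralForm (deriv η t) (deriv η t) = 0)
    (hη2 : ∀ t, neutralForm (α t) (deriv η t) = 0)
    (hη3 : ∀ t, neutralForm (deriv η t) (deriv α t) = -(1 / a t))
    (hη4 : ∀ t, neutralForm (deriv η t) (deriv (deriv α) t) =
      (2 * deriv a t - a t * L t) / (a t) ^ 2) :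
    ∀ s t : ℝ,
      neutralForm (deriv (fun x => bicSurf α η a L m x t) s)
          (deriv (fun x => bicSurf α η a L m x t) s) = 0 ∧
      neutralForm (deriv (fun x => bicSurf α η a L m x t) s)
          (deriv (fun y => bicSurf α η a L m s y) t) = -1 ∧
      neutralForm (deriv (fun y => bicSurf α η a L m s y) t)
          (deriv (fun y => bicSurf α η a L m s y) t) = 2 * m s t := by
  intro s t
  -- smoothness bookkeeping
  have h1inf : (∞ : WithTop ℕ∞) ≠ 0 := by simp
  have hα1 : ContDiff ℝ ∞ α := hα.of_le (by simp)
  have hη1' : ContDiff ℝ ∞ η := hη.of_le (by simp)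
  have ha1 : ContDiff ℝ ∞ a := ha.of_le (by simp)
  have hL1 : ContDiff ℝ ∞ L := hL.of_le (by simp)
  have hm1 : ContDiff ℝ ∞ (fun p : ℝ × ℝ => m p.1 p.2) := hm.of_le (by simp)
  have hdα : ContDiff ℝ ∞ (deriv α) := (contDiff_infty_iff_deriv.mp hα1).2
  have hda : ContDiff ℝ ∞ (deriv a) := (contDiff_infty_iff_deriv.mp ha1).2
  have Dα : ∀ u, HasDerivAt α (deriv α u) u :=
    fun u => ((hα1.differentiable h1inf) u).hasDerivAt
  have Ddα : ∀ u, HasDerivAt (deriv α) (deriv (deriv α) u) u :=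
    fun u => ((hdα.differentiable h1inf) u).hasDerivAt
  have Dη : ∀ u, HasDerivAt η (deriv η u) u :=
    fun u => ((hη1'.differentiable h1inf) u).hasDerivAt
  have Da : ∀ u, HasDerivAt a (deriv a u) u :=
    fun u => ((ha1.differentiable h1inf) u).hasDerivAt
  have Dda : ∀ u, HasDerivAt (deriv a) (deriv (deriv a) u) u :=
    fun u => ((hda.differentiable h1inf) u).hasDerivAt
  have DL : ∀ u, HasDerivAt L (deriv L u) u :=
    fun u => ((hL1.differentiable h1inf) u).hasDerivAt
  have hmx : ContDiff ℝ ∞ (fun x => m x t) := hm1.comp (contDiff_id.prodMk contDiff_const)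
  have hmy : ContDiff ℝ ∞ (fun y => m s y) := hm1.comp (contDiff_const.prodMk contDiff_id)
  have DmS : HasDerivAt (fun x => m x t) (deriv (fun x => m x t) s) s :=
    ((hmx.differentiable h1inf) s).hasDerivAt
  have DmT : HasDerivAt (fun y => m s y) (deriv (fun y => m s y) t) t :=
    ((hmy.differentiable h1inf) t).hasDerivAt
  -- derived orthogonality relations of α, α', α''
  have key : ∀ u, neutralForm (α u) (deriv α u) = 0 := by
    intro u
    have h := hasDerivAt_nf (Dα u) (Dα u)
    have h0 : HasDerivAt (fun x => neutralForm (α x) (α x)) 0 u := by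
      have he : (fun x => neutralForm (α x) (α x)) = fun _ => (0 : ℝ) := funext hαcone
      rw [he]; exact hasDerivAt_const u 0
    have hu := h.unique h0
    have hs := nf_symm (α u) (deriv α u)
    linarith
  have h02 : ∀ u, neutralForm (α u) (deriv (deriv α) u) = 0 := by
    intro u
    have h := hasDerivAt_nf (Dα u) (Ddα u)
    have h0 : HasDerivAt (fun x => neutralForm (α x) (deriv α x)) 0 u := by
      have he : (fun x => neutralForm (α x) (deriv α x)) = fun _ => (0 : ℝ) := funext key
      rw [he]; exact hasDerivAt_const u 0
    have hu := h.unique h0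
    have := hαnull u
    have hs := nf_symm (deriv α u) (α u)
    linarith [nf_symm (deriv α u) (deriv α u)]
  have h12 : ∀ u, neutralForm (deriv α u) (deriv (deriv α) u) = 0 := by
    intro u
    have h := hasDerivAt_nf (Ddα u) (Ddα u)
    have h0 : HasDerivAt (fun x => neutralForm (deriv α x) (deriv α x)) 0 u := by
      have he : (fun x => neutralForm (deriv α x) (deriv α x)) = fun _ => (0 : ℝ) :=
        funext hαnull
      rw [he]; exact hasDerivAt_const u 0
    have hu := h.unique h0
    have hs := nf_symm (deriv α u) (deriv (deriv α) u)
    linarith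
  have h22 : neutralForm (deriv (deriv α) t) (deriv (deriv α) t) = 0 :=
    isotropic_of_orthogonal (α t) (deriv α t) (deriv (deriv α) t) (hdim t)
      (hαcone t) (key t) (hαnull t) (h02 t) (h12 t)
  -- the s-partial derivative
  have Hs : HasDerivAt (fun x => bicSurf α η a L m x t)
      ((deriv a t - a t * (deriv (fun x => m x t) s + L t)) • α t + a t • deriv α t) s := by
    have h1 : HasDerivAt (fun x : ℝ => x * deriv a t - a t * (m x t + x * L t))
        (deriv a t - a t * (deriv (fun x => m x t) s + L t)) s := by
      have := ((hasDerivAt_id s).mul_const (deriv a t)).sub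
        ((DmS.add ((hasDerivAt_id s).mul_const (L t))).const_mul (a t))
      exact this.congr_deriv (by simp)
    have h2 : HasDerivAt (fun x : ℝ => x * a t) (a t) s := by
      simpa using (hasDerivAt_id s).mul_const (a t)
    have h3 := ((hasDerivAt_const s (η t)).add (h1.smul_const (α t))).add
      (h2.smul_const (deriv α t))
    simp only [zero_add] at h3
    exact h3
  -- the t-partial derivative
  have hc1 : HasDerivAt (fun y : ℝ => s * deriv a y - a y * (m s y + s * L y))
      (s * deriv (deriv a) t -
        (deriv a t * (m s t + s * L t) +
          a t * (deriv (fun y => m s y) t + s * deriv L t))) t :=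
    ((Dda t).const_mul s).sub ((Da t).mul (DmT.add ((DL t).const_mul s)))
  have hc2 : HasDerivAt (fun y : ℝ => s * a y) (s * deriv a t) t := (Da t).const_mul s
  have Ht : HasDerivAt (fun y => bicSurf α η a L m s y)
      (deriv η t +
        ((s * deriv a t - a t * (m s t + s * L t)) • deriv α t +
          (s * deriv (deriv a) t -
            (deriv a t * (m s t + s * L t) +
              a t * (deriv (fun y => m s y) t + s * deriv L t))) • α t) +
        ((s * a t) • deriv (deriv α) t + (s * deriv a t) • deriv α t)) t :=
    ((Dη t).add (hc1.smul (Dα t))).add (hc2.smul (Ddα t))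
  -- assemble
  have eAE := hη2 t
  have eEA : neutralForm (deriv η t) (α t) = 0 := by rw [nf_symm]; exact eAE
  have eA1E : neutralForm (deriv α t) (deriv η t) = -(1 / a t) := by
    rw [nf_symm]; exact hη3 t
  have eA2E : neutralForm (deriv (deriv α) t) (deriv η t) =
      (2 * deriv a t - a t * L t) / (a t) ^ 2 := by rw [nf_symm]; exact hη4 t
  have eA1A : neutralForm (deriv α t) (α t) = 0 := by rw [nf_symm]; exact key t
  have eA2A : neutralForm (deriv (deriv α) t) (α t) = 0 := by rw [nf_symm]; exact h02 t
  have eA2A1 : neutralForm (deriv (deriv α) t) (deriv α t) = 0 := by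
    rw [nf_symm]; exact h12 t
  refine ⟨?_, ?_, ?_⟩
  · rw [Hs.deriv]
    simp only [nf_add_left, nf_add_right, nf_smul_left, nf_smul_right,
      hαcone t, hαnull t, key t, eA1A]
    ring
  · rw [Hs.deriv, Ht.deriv]
    simp only [nf_add_left, nf_add_right, nf_smul_left, nf_smul_right,
      hαcone t, hαnull t, key t, eA1A, h02 t, eA2A, h12 t, eA2A1, h22,
      hη1 t, eAE, eEA, hη3 t, eA1E, hη4 t, eA2E]
    field_simp [ha0 t]
    ring
  · rw [Ht.deriv]
    simp only [nf_add_left, nf_add_right, nf_smul_left, nf_smul_right,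
      hαcone t, hαnull t, key t, eA1A, h02 t, eA2A, h12 t, eA2A1, h22,
      hη1 t, eAE, eEA, hη3 t, eA1E, hη4 t, eA2E]
    have hb : a t * (a t)⁻¹ = 1 := mul_inv_cancel₀ (ha0 t)
    simp only [div_eq_mul_inv, one_div]
    linear_combination (2 * m s t + 4 * s * deriv a t * (a t)⁻¹ -
      2 * s * a t * L t * (a t)⁻¹) * hb
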